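/- arXiv:2104.14347 — 3 statements merged into one kernel-verified Lean document; each statement's English description precedes it below -/
import Mathlib

section
/- Let π be a picking sequence on n agents and m items, and let π' be a picking sequence on n agents and m+1 items such that π is a prefix of π'. Fix additive utility functions of the n agents over m+1 items (where in the instance for π only the first m items are present). Then for every agent, the utility she receives from the allocation produced by π' on the m+1 items is at least the utility she receives from the allocation produced by π on the first m items. In particular, any resource-consistent family of picking sequences satisfies resource-monotonicity. -/
open Finset

/-- The favorite item of an agent with item-utility function `u` among a remaining
set `R` of items: a highest-valued item, ties broken in favor of the lower-numbered item. -/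
noncomputable def favorite {m : ℕ} (u : Fin m → ℝ) (R : Finset (Fin m)) : Option (Fin m) :=
  if h : (R.filter fun j => ∀ j' ∈ R, u j' ≤ u j).Nonempty then
    some ((R.filter fun j => ∀ j' ∈ R, u j' ≤ u j).min' h)
  else none

/-- One step of the picking process: agent `a` picks her favorite remaining item. -/
noncomputable def pickStep {n m : ℕ} (u : Fin n → Fin m → ℝ)
    (st : Finset (Fin m) × (Fin n → Finset (Fin m))) (a : Fin n) :
    Finset (Fin m) × (Fin n → Finset (Fin m)) :=
  match favorite (u a) st.1 with
  | none => st
  | some j => (st.1.erase j, Function.update st.2 a (insert j (st.2 a)))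

/-- The allocation produced by letting agents pick their favorite remaining items
in the order given by the picking sequence `π`. -/
noncomputable def allocate {n m : ℕ} (u : Fin n → Fin m → ℝ) (π : List (Fin n)) :
    Fin n → Finset (Fin m) :=
  (π.foldl (pickStep u) (Finset.univ, fun _ => ∅)).2

lemma favorite_spec {m : ℕ} (u : Fin m → ℝ) (R : Finset (Fin m)) (hR : R.Nonempty) :
    ∃ f, favorite u R = some f ∧ f ∈ R ∧ (∀ k ∈ R, u k ≤ u f) ∧
      ∀ k ∈ R, (∀ k' ∈ R, u k' ≤ u k) → f ≤ k := by
  obtain ⟨b, hb, hmax⟩ := R.exists_max_image u hR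
  have h : (R.filter fun j => ∀ j' ∈ R, u j' ≤ u j).Nonempty :=
    ⟨b, mem_filter.2 ⟨hb, hmax⟩⟩
  have hfm := (R.filter fun j => ∀ j' ∈ R, u j' ≤ u j).min'_mem h
  rw [mem_filter] at hfm
  exact ⟨_, by rw [favorite, dif_pos h], hfm.1, hfm.2,
    fun k hk hkm => min'_le _ _ (mem_filter.2 ⟨hk, hkm⟩)⟩

lemma pickStep_some {n m : ℕ} (u : Fin n → Fin m → ℝ)
    (st : Finset (Fin m) × (Fin n → Finset (Fin m))) (a : Fin n) (j : Fin m)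
    (h : favorite (u a) st.1 = some j) :
    pickStep u st a = (st.1.erase j, Function.update st.2 a (insert j (st.2 a))) := by
  simp [pickStep, h]

def PickInv {n m : ℕ} (u : Fin n → Fin (m + 1) → ℝ)
    (st : Finset (Fin m) × (Fin n → Finset (Fin m)))
    (st' : Finset (Fin (m + 1)) × (Fin n → Finset (Fin (m + 1)))) : Prop :=
  (∃ x, x ∉ st.1.image Fin.castSucc ∧ st'.1 = insert x (st.1.image Fin.castSucc)) ∧
  (∀ b, ∀ j ∈ st'.2 b, j ∉ st'.1) ∧
  ∀ b, (∑ j ∈ st.2 b, u b j.castSucc) ≤ ∑ j ∈ st'.2 b, u b j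

lemma inv_step {n m : ℕ} (u : Fin n → Fin (m + 1) → ℝ) (hu : ∀ i j, 0 ≤ u i j)
    (st : Finset (Fin m) × (Fin n → Finset (Fin m)))
    (st' : Finset (Fin (m + 1)) × (Fin n → Finset (Fin (m + 1)))) (a : Fin n)
    (hne : st.1.Nonempty) (hinv : PickInv u st st') :
    PickInv u (pickStep (fun b y => u b y.castSucc) st a) (pickStep u st' a) := by
  obtain ⟨⟨x, hx, hR'⟩, hdisj, hsum⟩ := hinv
  obtain ⟨f, hfav, hfR, hfmax, hfmin⟩ := favorite_spec (fun y => u a y.castSucc) st.1 hne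
  have hR'ne : st'.1.Nonempty := by rw [hR']; exact insert_nonempty _ _
  obtain ⟨j', hfav', hj'R, hj'max, hj'min⟩ := favorite_spec (u a) st'.1 hR'ne
  have hcfR' : f.castSucc ∈ st'.1 := by
    rw [hR']; exact mem_insert_of_mem (mem_image_of_mem _ hfR)
  have hle : u a f.castSucc ≤ u a j' := hj'max _ hcfR'
  have hcase : j' = x ∨ j' = f.castSucc := by
    have hj'R2 := hj'R
    rw [hR', mem_insert] at hj'R2
    rcases hj'R2 with h | h
    · exact Or.inl h
    · right
      obtain ⟨k, hkR, rfl⟩ := mem_image.1 h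
      have hkmax : ∀ k' ∈ st.1, u a k'.castSucc ≤ u a k.castSucc := fun k' hk' =>
        hj'max _ (by rw [hR']; exact mem_insert_of_mem (mem_image_of_mem _ hk'))
      have hfk : f.castSucc ≤ k.castSucc := by
        simpa using hfmin k hkR hkmax
      have hcfmax : ∀ z ∈ st'.1, u a z ≤ u a f.castSucc := by
        intro z hz
        have hz1 : u a z ≤ u a k.castSucc := hj'max z hz
        exact le_trans hz1 (hfmax k hkR)
      exact le_antisymm (hj'min _ hcfR' hcfmax) hfk
  rw [pickStep_some _ _ _ _ hfav, pickStep_some _ _ _ _ hfav']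
  refine ⟨?_, ?_, ?_⟩
  · -- remaining-set relation
    rcases hcase with rfl | rfl
    · -- big pick is the extra item: new extra item is castSucc f
      refine ⟨f.castSucc, ?_, ?_⟩
      · intro hmem
        obtain ⟨k, hk, hkeq⟩ := mem_image.1 hmem
        exact (mem_erase.1 hk).1 (Fin.castSucc_injective _ hkeq)
      · rw [hR', Finset.erase_insert hx, Finset.image_erase (Fin.castSucc_injective _),
          insert_erase (mem_image_of_mem _ hfR)]
    · -- big pick matches small pick: extra item stays x
      refine ⟨x, fun hmem => hx (image_subset_image (erase_subset _ _) hmem), ?_⟩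
      have hxne : x ≠ f.castSucc := fun h => hx (h ▸ mem_image_of_mem _ hfR)
      rw [hR', erase_insert_of_ne (fun h => hxne h),
        ← Finset.image_erase (Fin.castSucc_injective _)]
  · -- disjointness
    intro b j hj
    dsimp only at hj ⊢
    by_cases hba : b = a
    · subst hba
      rw [Function.update_self, mem_insert] at hj
      rcases hj with rfl | hj
      · exact notMem_erase _ _
      · exact fun hmem => hdisj b j hj (erase_subset _ _ hmem)
    · rw [Function.update_of_ne hba] at hj
      exact fun hmem => hdisj b j hj (erase_subset _ _ hmem)
  · -- utility sums
    intro b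
    dsimp only
    by_cases hba : b = a
    · subst hba
      rw [Function.update_self, Function.update_self]
      have hj'new : j' ∉ st'.2 b := fun h => hdisj b j' h hj'R
      rw [sum_insert hj'new]
      by_cases hfold : f ∈ st.2 b
      · rw [insert_eq_self.2 hfold]
        exact le_trans (hsum b) (le_add_of_nonneg_left (hu b j'))
      · rw [sum_insert hfold]
        exact add_le_add hle (hsum b)
    · rw [Function.update_of_ne hba, Function.update_of_ne hba]
      exact hsum b


lemma inv_fold {n m : ℕ} (u : Fin n → Fin (m + 1) → ℝ) (hu : ∀ i j, 0 ≤ u i j)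
    (L : List (Fin n)) :
    ∀ st st', PickInv u st st' → L.length ≤ st.1.card →
      PickInv u (L.foldl (pickStep fun b y => u b y.castSucc) st)
        (L.foldl (pickStep u) st') := by
  induction L with
  | nil => intro st st' h _; simpa using h
  | cons a t ih =>
    intro st st' hinv hlen
    rw [List.length_cons] at hlen
    have hne : st.1.Nonempty := card_pos.1 (lt_of_lt_of_le (Nat.succ_pos _) hlen)
    rw [List.foldl_cons, List.foldl_cons]
    refine ih _ _ (inv_step u hu st st' a hne hinv) ?_
    obtain ⟨f, hfav, hfR, -, -⟩ := favorite_spec (fun y => u a y.castSucc) st.1 hne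
    rw [pickStep_some _ _ _ _ hfav]
    dsimp only
    rw [card_erase_of_mem hfR]
    omega

lemma sum_le_foldl {n m : ℕ} (u : Fin n → Fin m → ℝ) (hu : ∀ i j, 0 ≤ u i j)
    (L : List (Fin n)) :
    ∀ (st : Finset (Fin m) × (Fin n → Finset (Fin m))) (b : Fin n),
    (∑ j ∈ st.2 b, u b j) ≤ ∑ j ∈ (L.foldl (pickStep u) st).2 b, u b j := by
  induction L with
  | nil => intro st b; simp
  | cons a t ih =>
    intro st b
    rw [List.foldl_cons]
    refine le_trans ?_ (ih _ b)
    cases hfa : favorite (u a) st.1 with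
    | none => simp [pickStep, hfa]
    | some j =>
      rw [pickStep_some _ _ _ _ hfa]
      dsimp only
      by_cases hba : b = a
      · subst hba
        rw [Function.update_self]
        exact sum_le_sum_of_subset_of_nonneg (subset_insert _ _)
          (fun k _ _ => hu b k)
      · rw [Function.update_of_ne hba]


/-- If `π` (on `m` items) is a prefix of `π'` (on `m + 1` items,
where the extra item is the highest-numbered one), then for any additive utilities
every agent receives at least as much utility from the allocation produced by `π'`
as from the allocation produced by `π`. In particular, any resource-consistent
family of picking sequences satisfies resource-monotonicity. -/
theorem resource_consistent_implies_resource_monotone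
    (n m : ℕ) (π : List (Fin n)) (π' : List (Fin n))
    (hlen : π.length = m) (hlen' : π'.length = m + 1) (hpre : π <+: π')
    (u : Fin n → Fin (m + 1) → ℝ) (hu : ∀ i j, 0 ≤ u i j) (i : Fin n) :
    (∑ x ∈ allocate (fun a (y : Fin m) => u a y.castSucc) π i, u i x.castSucc) ≤
      ∑ x ∈ allocate u π' i, u i x := by
  obtain ⟨t, rfl⟩ := hpre
  have hinv0 : PickInv u (Finset.univ, fun _ => ∅) (Finset.univ, fun _ => ∅) := by
    refine ⟨⟨Fin.last m, ?_, ?_⟩, by simp, by simp⟩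
    · simp only [mem_image, mem_univ, true_and, not_exists]
      exact fun j h => absurd h (Fin.castSucc_lt_last j).ne
    · ext j
      simp only [mem_univ, mem_insert, mem_image, true_and, true_iff]
      rcases Fin.eq_castSucc_or_eq_last j with ⟨k, rfl⟩ | rfl
      · exact Or.inr ⟨k, rfl⟩
      · exact Or.inl rfl
  have hfold := inv_fold u hu π _ _ hinv0 (by simp [hlen])
  have h1 := hfold.2.2 i
  refine le_trans h1 ?_
  unfold allocate
  rw [List.foldl_append]
  exact sum_le_foldl u hu t _ i
end

section
/- Suppose there are two agents and m indivisible items with additive utilities. Let π be a picking sequence of length m and let π' be a picking sequence of length m obtained from π by moving some of agent 1's picks earlier (possibly none), inserting occurrences of agent 1 in some positions (possibly none), and trimming the suffix of the resulting sequence so that it has length m. Then, for any utility functions of the two agents, agent 1 receives at least as much total utility from the allocation produced by π' as from the allocation produced by π. In particular, for two agents any weight-consistent family of picking sequences satisfies weight-monotonicity. -/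
/-!
Write `gain u 0 σ R` for what agent `0` collects when the picks `σ` are made from the remaining
items `R`. The key exchange fact: if `b` and `a` are the favorites of agents `0` and `1` in `S`,
agent `0` does at least as well from `S \ {a}` as from `S \ {b}`. It makes swapping adjacent
picks `1, 0` into `0, 1` profitable for agent `0`: if both want the same item she takes it instead
of her second choice, and then agent `1` removes his favorite rather than her second choice. So
moving agent `0`'s first pick forward past picks of agent `1` never hurts her. Comparing `π` with
`π'` from their first difference, where prefix dominance forces `π` to show `1` and `π'` to show
`0`, one brings the next `0` of `π` forward and recurses.
-/

open Finset

section Favorite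

variable {m : ℕ} {u : Fin m → ℝ} {R : Finset (Fin m)} {j : Fin m}

theorem favorite_eq_some_iff :
    favorite u R = some j ↔
      j ∈ R ∧ (∀ j' ∈ R, u j' ≤ u j) ∧ ∀ j' ∈ R, u j' = u j → j ≤ j' := by
  unfold favorite
  split_ifs with hF
  · rw [Option.some_inj, Finset.min'_eq_iff, mem_filter]
    constructor
    · rintro ⟨⟨hj, hmax⟩, hmin⟩
      exact ⟨hj, hmax, fun j' hj' heq => hmin j' (mem_filter.2 ⟨hj', heq ▸ hmax⟩)⟩
    · rintro ⟨hj, hmax, hmin⟩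
      exact ⟨⟨hj, hmax⟩, fun j' hj' =>
        hmin j' (mem_filter.1 hj').1 (le_antisymm (hmax j' (mem_filter.1 hj').1)
          ((mem_filter.1 hj').2 j hj))⟩
  · simp only [false_iff]
    rintro ⟨hj, hmax, -⟩
    exact hF ⟨j, mem_filter.2 ⟨hj, hmax⟩⟩

theorem favorite_mem (h : favorite u R = some j) : j ∈ R :=
  (favorite_eq_some_iff.1 h).1

theorem le_of_favorite_eq_some (h : favorite u R = some j) {j' : Fin m} (hj' : j' ∈ R) :
    u j' ≤ u j :=
  (favorite_eq_some_iff.1 h).2.1 j' hj'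

theorem favorite_erase (h : favorite u R = some j) {x : Fin m} (hx : x ≠ j) :
    favorite u (R.erase x) = some j := by
  obtain ⟨hj, hmax, hmin⟩ := favorite_eq_some_iff.1 h
  exact favorite_eq_some_iff.2 ⟨mem_erase.2 ⟨hx.symm, hj⟩,
    fun j' hj' => hmax j' (mem_of_mem_erase hj'),
    fun j' hj' => hmin j' (mem_of_mem_erase hj')⟩

theorem exists_favorite_eq_some (hR : R.Nonempty) : ∃ j, favorite u R = some j := by
  obtain ⟨j, hj, hmax⟩ := R.exists_max_image u hR
  exact ⟨_, dif_pos ⟨j, mem_filter.2 ⟨hj, hmax⟩⟩⟩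

@[simp]
theorem favorite_empty : favorite u ∅ = none := by
  simp [favorite]

end Favorite

noncomputable def gain {n m : ℕ} (u : Fin n → Fin m → ℝ) (i : Fin n) :
    List (Fin n) → Finset (Fin m) → ℝ
  | [], _ => 0
  | a :: σ, R =>
    match favorite (u a) R with
    | none => gain u i σ R
    | some j => (if a = i then u i j else 0) + gain u i σ (R.erase j)

section Gain

variable {n m : ℕ} {u : Fin n → Fin m → ℝ} {i : Fin n}

@[simp]
theorem gain_nil (R : Finset (Fin m)) : gain u i [] R = 0 := rfl

theorem gain_cons_of_favorite_eq_some {a : Fin n} {σ : List (Fin n)} {R : Finset (Fin m)}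
    {j : Fin m} (h : favorite (u a) R = some j) :
    gain u i (a :: σ) R = (if a = i then u i j else 0) + gain u i σ (R.erase j) := by
  rw [gain, h]

@[simp]
theorem gain_empty (σ : List (Fin n)) : gain u i σ ∅ = 0 := by
  induction σ with
  | nil => rfl
  | cons a σ ih => rw [gain, favorite_empty, ih]

theorem gain_of_notMem {σ : List (Fin n)} (hi : i ∉ σ) (R : Finset (Fin m)) :
    gain u i σ R = 0 := by
  induction σ generalizing R with
  | nil => rfl
  | cons a σ ih =>
    obtain ⟨hai, hσ⟩ := not_or.1 (List.mem_cons.not.1 hi)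
    unfold gain
    split
    · exact ih hσ R
    · rw [if_neg (Ne.symm hai), ih hσ, add_zero]

theorem gain_nonneg (hu : ∀ j, 0 ≤ u i j) (σ : List (Fin n)) (R : Finset (Fin m)) :
    0 ≤ gain u i σ R := by
  induction σ generalizing R with
  | nil => rfl
  | cons a σ ih =>
    unfold gain
    split
    · exact ih R
    · exact add_nonneg (by split_ifs <;> simp [hu]) (ih _)

theorem gain_cons_mono {σ σ' : List (Fin n)} (h : ∀ R, gain u i σ R ≤ gain u i σ' R)
    (a : Fin n) (R : Finset (Fin m)) : gain u i (a :: σ) R ≤ gain u i (a :: σ') R := by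
  unfold gain
  split
  · exact h R
  · exact add_le_add le_rfl (h _)

theorem sum_foldl_pickStep (π : List (Fin n)) (st : Finset (Fin m) × (Fin n → Finset (Fin m)))
    (hst : Disjoint (st.2 i) st.1) :
    ∑ x ∈ (π.foldl (pickStep u) st).2 i, u i x = ∑ x ∈ st.2 i, u i x + gain u i π st.1 := by
  induction π generalizing st with
  | nil => simp
  | cons a σ ih =>
    rw [List.foldl_cons]
    rcases h : favorite (u a) st.1 with _ | j
    · simp only [pickStep, h, ih st hst, gain]
    · have hj : j ∉ st.2 i := disjoint_right.1 hst (favorite_mem h)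
      have hst' : Disjoint (Function.update st.2 a (insert j (st.2 a)) i) (st.1.erase j) := by
        rcases eq_or_ne i a with rfl | hia
        · rw [Function.update_self, disjoint_insert_left]
          exact ⟨notMem_erase _ _, disjoint_of_subset_right (erase_subset _ _) hst⟩
        · rw [Function.update_of_ne hia]
          exact disjoint_of_subset_right (erase_subset _ _) hst
      simp only [pickStep, h]
      rw [ih _ hst', gain_cons_of_favorite_eq_some h]
      dsimp only
      rcases eq_or_ne a i with rfl | hai
      · rw [Function.update_self, sum_insert hj, if_pos rfl]
        ring
      · rw [Function.update_of_ne (Ne.symm hai), if_neg hai, zero_add]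

theorem sum_allocate_eq_gain (π : List (Fin n)) :
    ∑ x ∈ allocate u π i, u i x = gain u i π univ := by
  simpa [allocate] using sum_foldl_pickStep (u := u) π (univ, fun _ => ∅) (disjoint_empty_left _)

end Gain

theorem List.exists_eq_append_cons_notMem_of_mem {α : Type*} {a : α} {l : List α} (h : a ∈ l) :
    ∃ l₁ l₂, l = l₁ ++ a :: l₂ ∧ a ∉ l₁ := by
  induction l with
  | nil => simp at h
  | cons b l ih =>
    by_cases hb : a = b
    · exact ⟨[], l, by rw [hb]; rfl, List.not_mem_nil⟩
    · obtain ⟨l₁, l₂, rfl, h₁⟩ := ih ((List.mem_cons.1 h).resolve_left hb)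
      exact ⟨b :: l₁, l₂, rfl, by simp [hb, h₁]⟩

def PrefixDominated {α : Type*} [DecidableEq α] (a : α) (l l' : List α) : Prop :=
  ∀ k, (l.take k).count a ≤ (l'.take k).count a

namespace PrefixDominated

variable {α : Type*} [DecidableEq α] {a b : α} {l l' : List α}

theorem tail (h : PrefixDominated a (b :: l) (b :: l')) : PrefixDominated a l l' :=
  fun k => by simpa [List.count_cons] using h (k + 1)

theorem eq_of_cons (h : PrefixDominated a (a :: l) (b :: l')) : b = a := by
  by_contra hb
  simpa [List.count_cons, hb] using h 1

theorem notMem_of_nil (h : PrefixDominated a l []) : a ∉ l := by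
  simpa [List.count_eq_zero] using h l.length

theorem of_append_cons {l₁ l₂ : List α} (h₁ : a ∉ l₁)
    (h : PrefixDominated a (l₁ ++ a :: l₂) (a :: l')) : PrefixDominated a (l₁ ++ l₂) l' := by
  have hcount : ∀ (l₂ : List α) k,
      ((l₁ ++ l₂).take k).count a = (l₂.take (k - l₁.length)).count a := by
    intro l₂ k
    rw [List.take_append, List.count_append,
      List.count_eq_zero.2 fun hm => h₁ (List.mem_of_mem_take hm), zero_add]
  intro k
  have hk := h (k + 1)
  rw [hcount, List.take_succ_cons, List.count_cons_self] at hk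
  rw [hcount]
  rcases le_or_gt l₁.length k with hle | hlt
  · rw [show k + 1 - l₁.length = k - l₁.length + 1 by omega, List.take_succ_cons,
      List.count_cons_self] at hk
    omega
  · simp [Nat.sub_eq_zero_of_le hlt.le]

end PrefixDominated

section TwoAgents

variable {m : ℕ} {u : Fin 2 → Fin m → ℝ}

-- After every pick the two remaining sets again differ by such a pair of favorites.
theorem gain_erase_favorite_le_erase_rival_favorite (σ : List (Fin 2)) {S : Finset (Fin m)}
    {a b : Fin m} (hb : favorite (u 0) S = some b) (ha : favorite (u 1) S = some a) :
    gain u 0 σ (S.erase b) ≤ gain u 0 σ (S.erase a) := by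
  induction σ generalizing S a b with
  | nil => simp
  | cons c σ ih =>
    rcases eq_or_ne a b with rfl | hab
    · exact le_rfl
    obtain rfl | rfl : c = 0 ∨ c = 1 := by omega
    · obtain ⟨x, hx⟩ := exists_favorite_eq_some (u := u 0)
        ⟨a, mem_erase.2 ⟨hab, favorite_mem ha⟩⟩
      rw [gain_cons_of_favorite_eq_some hx,
        gain_cons_of_favorite_eq_some (favorite_erase hb hab), if_pos rfl, if_pos rfl,
        erase_right_comm (a := a)]
      exact add_le_add (le_of_favorite_eq_some hb (mem_of_mem_erase (favorite_mem hx)))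
        (ih hx (favorite_erase ha hab.symm))
    · obtain ⟨y, hy⟩ := exists_favorite_eq_some (u := u 1)
        ⟨b, mem_erase.2 ⟨hab.symm, favorite_mem hb⟩⟩
      rw [gain_cons_of_favorite_eq_some (favorite_erase ha hab.symm),
        gain_cons_of_favorite_eq_some hy, if_neg one_ne_zero, if_neg one_ne_zero, zero_add,
        zero_add,
        erase_right_comm]
      exact ih (favorite_erase hb hab) hy

theorem gain_swap_le (hu : ∀ j, 0 ≤ u 0 j) (σ : List (Fin 2)) (R : Finset (Fin m)) :
    gain u 0 (1 :: 0 :: σ) R ≤ gain u 0 (0 :: 1 :: σ) R := by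
  rcases R.eq_empty_or_nonempty with rfl | hR
  · simp
  obtain ⟨x, hx⟩ := exists_favorite_eq_some (u := u 0) hR
  obtain ⟨y, hy⟩ := exists_favorite_eq_some (u := u 1) hR
  rw [gain_cons_of_favorite_eq_some hy, gain_cons_of_favorite_eq_some hx, if_neg one_ne_zero,
    if_pos rfl, zero_add]
  rcases eq_or_ne x y with rfl | hxy
  · rcases (R.erase x).eq_empty_or_nonempty with hR' | hR'
    · rw [hR', gain_empty, gain_empty, add_zero]
      exact hu x
    obtain ⟨x₂, hx₂⟩ := exists_favorite_eq_some (u := u 0) hR'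
    obtain ⟨y₂, hy₂⟩ := exists_favorite_eq_some (u := u 1) hR'
    rw [gain_cons_of_favorite_eq_some hx₂, gain_cons_of_favorite_eq_some hy₂, if_pos rfl,
      if_neg one_ne_zero, zero_add]
    exact add_le_add (le_of_favorite_eq_some hx (mem_of_mem_erase (favorite_mem hx₂)))
      (gain_erase_favorite_le_erase_rival_favorite σ hx₂ hy₂)
  · rw [gain_cons_of_favorite_eq_some (favorite_erase hx hxy.symm),
      gain_cons_of_favorite_eq_some (favorite_erase hy hxy), if_pos rfl, if_neg one_ne_zero,
      zero_add, erase_right_comm]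

theorem gain_append_cons_zero_le (hu : ∀ j, 0 ≤ u 0 j) {ρ : List (Fin 2)} (hρ : 0 ∉ ρ)
    (τ : List (Fin 2)) (R : Finset (Fin m)) :
    gain u 0 (ρ ++ 0 :: τ) R ≤ gain u 0 (0 :: (ρ ++ τ)) R := by
  induction ρ generalizing R with
  | nil => exact le_rfl
  | cons b ρ ih =>
    obtain ⟨hb, hρ'⟩ := not_or.1 (List.mem_cons.not.1 hρ)
    obtain rfl : b = 1 := by omega
    calc gain u 0 (1 :: (ρ ++ 0 :: τ)) R ≤ gain u 0 (1 :: 0 :: (ρ ++ τ)) R :=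
          gain_cons_mono (ih hρ') 1 R
      _ ≤ gain u 0 (0 :: 1 :: (ρ ++ τ)) R := gain_swap_le hu _ R

theorem gain_le_of_prefixDominated (hu : ∀ j, 0 ≤ u 0 j) {π π' : List (Fin 2)} (h : PrefixDominated 0 π π')
    (R : Finset (Fin m)) : gain u 0 π R ≤ gain u 0 π' R := by
  induction π' generalizing π R with
  | nil => rw [gain_of_notMem h.notMem_of_nil, gain_nil]
  | cons a' ρ' ih =>
    rcases π with _ | ⟨a, ρ⟩
    · exact gain_nonneg hu _ R
    rcases eq_or_ne a a' with rfl | ha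
    · exact gain_cons_mono (fun R => ih h.tail R) a R
    obtain ⟨rfl, rfl⟩ : a = 1 ∧ a' = 0 := by
      have : a = 0 → a' = 0 := by rintro rfl; exact h.eq_of_cons
      omega
    by_cases h0 : 0 ∈ ρ
    · obtain ⟨ρ₁, ρ₂, rfl, hρ₁⟩ := List.exists_eq_append_cons_notMem_of_mem h0
      have hρ₁' : 0 ∉ 1 :: ρ₁ := by simp [hρ₁]
      calc gain u 0 (1 :: (ρ₁ ++ 0 :: ρ₂)) R ≤ gain u 0 (0 :: (1 :: ρ₁ ++ ρ₂)) R :=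
            gain_append_cons_zero_le hu hρ₁' ρ₂ R
        _ ≤ gain u 0 (0 :: ρ') R :=
            gain_cons_mono (fun R => ih (h.of_append_cons (l₁ := 1 :: ρ₁) hρ₁') R) 0 R
    · rw [gain_of_notMem (by simp [h0])]
      exact gain_nonneg hu _ R

end TwoAgents

/-- Agent 1 of the paper is `0`. For two agents, `π'` arises from `π` by moving picks of agent 1
earlier, inserting picks of agent 1 and trimming to length `m` exactly when `hdom` holds. -/
theorem weight_consistent_two_agents_monotone_general
    (m : ℕ) (u : Fin 2 → Fin m → ℝ) (hu : ∀ i j, 0 ≤ u i j)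
    (π π' : List (Fin 2))
    (hdom : ∀ k : ℕ, (π.take k).count 0 ≤ (π'.take k).count 0) :
    (∑ x ∈ allocate u π 0, u 0 x) ≤ ∑ x ∈ allocate u π' 0, u 0 x := by
  rw [sum_allocate_eq_gain, sum_allocate_eq_gain]
  exact gain_le_of_prefixDominated (hu 0) hdom univ

/-- Two agents (agent 1 is `0`, agent 2 is `1`). If `π'` is obtained from
`π` (both of length `m`) by moving some of agent 1's picks earlier, inserting
occurrences of agent 1, and trimming the suffix to length `m` — which, for
two agents, is equivalent to saying that every prefix of `π'` contains at least as
many picks of agent 1 as the corresponding prefix of `π` — then for any utility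
functions agent 1 receives at least as much total utility from the allocation
produced by `π'` as from the allocation produced by `π`. In particular, for two
agents any weight-consistent family of picking sequences satisfies
weight-monotonicity. -/
theorem weight_consistent_two_agents_monotone
    (m : ℕ) (u : Fin 2 → Fin m → ℝ) (hu : ∀ i j, 0 ≤ u i j)
    (π π' : List (Fin 2)) (hlen : π.length = m) (hlen' : π'.length = m)
    (hdom : ∀ k : ℕ, (π.take k).count 0 ≤ (π'.take k).count 0) :
    (∑ x ∈ allocate u π 0, u 0 x) ≤ ∑ x ∈ allocate u π' 0, u 0 x :=
  weight_consistent_two_agents_monotone_general m u hu π π' hdom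
end

section
/- A divisor method with function f satisfies weak weighted envy-freeness up to one item (WWEF1) — i.e., it produces a WWEF1 allocation for every instance (every number of agents and items, weights, and additive utilities) — if and only if both of the following conditions hold: (1) f(a)/f(b) ≤ a/b for all integers 1 ≤ b ≤ a; (2) f(a)/f(b) ≤ (a+1)/(b+1) for all integers 0 ≤ a ≤ b with b ≠ 0. -/
open Finset

/-- Weak weighted envy-freeness up to one item. -/
def isWWEF1 {n m : ℕ} (w : Fin n → ℝ) (u : Fin n → Fin m → ℝ)
    (M : Fin n → Finset (Fin m)) : Prop :=
  ∀ i j : Fin n, ∃ B ⊆ M j, B.card ≤ 1 ∧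
    ((∑ x ∈ M j \ B, u i x) / w j ≤ (∑ x ∈ M i, u i x) / w i ∨
     (∑ x ∈ M j, u i x) / w j ≤ (∑ x ∈ M i ∪ B, u i x) / w i)

/-- A divisor method is given by a strictly increasing `f : ℕ → ℝ` with `t ≤ f t ≤ t + 1`. -/
def IsDivisorFn (f : ℕ → ℝ) : Prop :=
  StrictMono f ∧ ∀ t : ℕ, (t : ℝ) ≤ f t ∧ f t ≤ t + 1

/-- `π` is the picking sequence induced by the divisor method with function `f` and
weights `w`: each pick goes to an agent minimizing `f t_i / w_i` (where `t_i` is the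
number of picks agent `i` has received so far), ties broken toward lower-numbered agents. -/
def IsDivisorSeq {n : ℕ} (f : ℕ → ℝ) (w : Fin n → ℝ) (π : List (Fin n)) : Prop :=
  ∀ (k : ℕ) (hk : k < π.length) (i : Fin n),
    f ((π.take k).count (π.get ⟨k, hk⟩)) / w (π.get ⟨k, hk⟩) ≤
      f ((π.take k).count i) / w i ∧
    (i < π.get ⟨k, hk⟩ →
      f ((π.take k).count (π.get ⟨k, hk⟩)) / w (π.get ⟨k, hk⟩) <
        f ((π.take k).count i) / w i)

/-!
Fix agents `i` and `j`. When `j` makes her `(s+1)`-st pick and `i` has made `c` picks, the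
divisor rule gives `wᵢ f(s) ≤ wⱼ f(c)`; conditions (1) and (2) turn this into
`wᵢ (s+1) ≤ wⱼ (c+1)` when `wᵢ ≤ wⱼ`, and into `1 ≤ c`, `wᵢ s ≤ wⱼ c` when `wⱼ ≤ wᵢ` and `s ≥ 1`.
As `i` picks greedily, that item of `j` is worth to `i` at most her own `c`-th item, and at most
the best item `g` of `j`'s bundle. Summing by parts against the antitone sequence of these bounds
gives `wᵢ uᵢ(Mⱼ) ≤ wⱼ (uᵢ(Mᵢ) + uᵢ(g))` in the first case and `wᵢ (uᵢ(Mⱼ) - uᵢ(g)) ≤ wⱼ uᵢ(Mᵢ)`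
in the second.

Conversely, if (1) or (2) fails at `(a, b)`, two agents with weights `f b` and `f a` sharing
`a + b + 1` items of unit value receive `b + 1` and `a` items, and the second one envies the first
by more than one item.
-/

namespace List

variable {α : Type*} (l : List α)

lemma take_add_one_eq_append_get (t : Fin l.length) :
    l.take (t + 1) = l.take t ++ [l.get t] := by
  rw [take_add_one, getElem?_eq_getElem t.2]
  rfl

variable [DecidableEq α] (a : α)

lemma count_take_add_one_get (t : Fin l.length) :
    (l.take (t + 1)).count (l.get t) = (l.take t).count (l.get t) + 1 := by
  rw [take_add_one_eq_append_get, count_append, count_singleton_self]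

lemma monotone_count_take : Monotone fun k => (l.take k).count a :=
  fun _ _ h => (take_sublist_take_left h).count_le a

lemma strictMonoOn_count_take :
    StrictMonoOn (fun t : Fin l.length => (l.take t).count a) {t | l.get t = a} := by
  rintro t (rfl : l.get t = a) t' - htt'
  calc (l.take t).count (l.get t) < (l.take (t + 1)).count (l.get t) := by
        rw [count_take_add_one_get]; omega
    _ ≤ (l.take t').count (l.get t) := monotone_count_take l _ (Fin.lt_def.mp htt')

lemma count_take_le_count (k : ℕ) :
    (l.take k).count a ≤ l.count a :=
  (l.take_sublist k).count_le a

lemma exists_get_eq_count_take_eq {k : ℕ} (hk : k < l.count a) :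
    ∃ t : Fin l.length, l.get t = a ∧ (l.take t).count a = k := by
  induction l generalizing k with
  | nil => simp at hk
  | cons b l ih =>
    by_cases hb : b = a
    · subst hb
      rcases k with _ | k
      · exact ⟨⟨0, by simp⟩, rfl, by simp⟩
      · obtain ⟨t, ht, hc⟩ := ih (k := k) (by simp at hk; omega)
        exact ⟨t.succ, ht, by simp [hc]⟩
    · obtain ⟨t, ht, hc⟩ := ih (by simpa [count_cons, hb] using hk)
      exact ⟨t.succ, ht, by simp [hb, hc]⟩

lemma image_count_take :
    ({t | l.get t = a} : Finset (Fin l.length)).image (fun t : Fin l.length => (l.take t).count a) =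
      Finset.range (l.count a) := by
  ext k
  simp only [Finset.mem_image, Finset.mem_filter, Finset.mem_univ, true_and, Finset.mem_range]
  constructor
  · rintro ⟨t, rfl, rfl⟩
    have := l.count_take_le_count (l.get t) (t + 1)
    rw [count_take_add_one_get] at this
    omega
  · intro hk
    obtain ⟨t, ht, hc⟩ := l.exists_get_eq_count_take_eq a hk
    exact ⟨t, ht, hc⟩

lemma card_filter_get_eq : #({t | l.get t = a} : Finset (Fin l.length)) = l.count a := by
  rw [← Finset.card_range (l.count a), ← image_count_take,
    Finset.card_image_of_injOn (by simpa using (strictMonoOn_count_take l a).injOn)]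

lemma sum_range_count {M : Type*} [AddCommMonoid M] (x : ℕ → M) :
    ∑ k ∈ Finset.range (l.count a), x k =
      ∑ t : Fin l.length with l.get t = a, x ((l.take t).count a) := by
  rw [← image_count_take, Finset.sum_image (by simpa using (strictMonoOn_count_take l a).injOn)]

lemma count_zero_add_count_one (l : List (Fin 2)) : l.count 0 + l.count 1 = l.length := by
  induction l with
  | nil => rfl
  | cons b l ih => fin_cases b <;> simp <;> omega

end List

lemma exists_favorite_eq_some_s10 {m : ℕ} (v : Fin m → ℝ) {R : Finset (Fin m)} (hR : R.Nonempty) :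
    ∃ g ∈ R, favorite v R = some g ∧ ∀ r ∈ R, v r ≤ v g := by
  obtain ⟨g₀, hg₀, hmax⟩ := R.exists_max_image v hR
  have hne : (R.filter fun j => ∀ j' ∈ R, v j' ≤ v j).Nonempty := ⟨g₀, mem_filter.2 ⟨hg₀, hmax⟩⟩
  obtain ⟨hmem, hbest⟩ := mem_filter.1 (min'_mem _ hne)
  exact ⟨_, hmem, by rw [favorite, dif_pos hne], hbest⟩

section Picking

variable {n m : ℕ} (u : Fin n → Fin m → ℝ) (π : List (Fin n))

noncomputable def stateAfter (k : ℕ) : Finset (Fin m) × (Fin n → Finset (Fin m)) :=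
  (π.take k).foldl (pickStep u) (univ, fun _ => ∅)

lemma stateAfter_add_one (t : Fin π.length) :
    stateAfter u π (t + 1) = pickStep u (stateAfter u π t) (π.get t) := by
  rw [stateAfter, List.take_add_one_eq_append_get, List.foldl_append]
  rfl

lemma allocate_eq_stateAfter_length : allocate u π = (stateAfter u π π.length).2 := by
  rw [allocate, stateAfter, List.take_length]

lemma antitone_stateAfter_fst : Antitone fun k => (stateAfter u π k).1 := by
  refine antitone_nat_of_succ_le fun k => ?_
  by_cases hk : k < π.length
  · rw [stateAfter_add_one u π ⟨k, hk⟩, pickStep]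
    split
    · exact subset_rfl
    · exact erase_subset _ _
  · simp only [stateAfter, List.take_of_length_le (not_lt.1 hk),
      List.take_of_length_le (Nat.le_succ_of_le (not_lt.1 hk)), subset_rfl]

variable {π} (hπ : π.length = m)
include hπ

lemma card_stateAfter_fst {k : ℕ} (hk : k ≤ π.length) : #(stateAfter u π k).1 = m - k := by
  induction k with
  | zero => simp [stateAfter]
  | succ k ih =>
    have hcard := ih (by omega)
    obtain ⟨g, hg, hfav, -⟩ := exists_favorite_eq_some_s10 (u (π.get ⟨k, by omega⟩))
      (R := (stateAfter u π k).1) (card_pos.1 (by omega))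
    rw [stateAfter_add_one u π ⟨k, by omega⟩, pickStep, hfav, card_erase_of_mem hg, hcard]
    omega

lemma exists_favorite_stateAfter_eq_some (t : Fin π.length) :
    ∃ g ∈ (stateAfter u π t).1, favorite (u (π.get t)) (stateAfter u π t).1 = some g ∧
      ∀ r ∈ (stateAfter u π t).1, u (π.get t) r ≤ u (π.get t) g :=
  exists_favorite_eq_some_s10 _ (card_pos.1 (by rw [card_stateAfter_fst u hπ t.2.le]; omega))

-- The default `t` is never used: every turn finds a remaining item.
noncomputable def pickedItem (t : Fin π.length) : Fin m :=
  (favorite (u (π.get t)) (stateAfter u π t).1).getD (t.cast hπ)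

lemma favorite_eq_pickedItem (t : Fin π.length) :
    favorite (u (π.get t)) (stateAfter u π t).1 = some (pickedItem u hπ t) := by
  obtain ⟨g, -, hg, -⟩ := exists_favorite_stateAfter_eq_some u hπ t
  rw [pickedItem, hg]
  rfl

lemma pickedItem_mem (t : Fin π.length) : pickedItem u hπ t ∈ (stateAfter u π t).1 := by
  obtain ⟨g, hg, hfav, -⟩ := exists_favorite_stateAfter_eq_some u hπ t
  rwa [Option.some_injective _ ((favorite_eq_pickedItem u hπ t).symm.trans hfav)]

lemma le_pickedItem (t : Fin π.length) {r : Fin m} (hr : r ∈ (stateAfter u π t).1) :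
    u (π.get t) r ≤ u (π.get t) (pickedItem u hπ t) := by
  obtain ⟨g, -, hfav, hbest⟩ := exists_favorite_stateAfter_eq_some u hπ t
  rw [Option.some_injective _ ((favorite_eq_pickedItem u hπ t).symm.trans hfav)]
  exact hbest r hr

lemma stateAfter_add_one_eq (t : Fin π.length) :
    stateAfter u π (t + 1) = ((stateAfter u π t).1.erase (pickedItem u hπ t),
      Function.update (stateAfter u π t).2 (π.get t)
        (insert (pickedItem u hπ t) ((stateAfter u π t).2 (π.get t)))) := by
  rw [stateAfter_add_one, pickStep, favorite_eq_pickedItem u hπ]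

lemma pickedItem_mem_of_le {t t' : Fin π.length} (h : t ≤ t') :
    pickedItem u hπ t' ∈ (stateAfter u π t).1 :=
  antitone_stateAfter_fst u π (Fin.le_def.1 h) (pickedItem_mem u hπ t')

lemma pickedItem_injective : Function.Injective (pickedItem u hπ) := by
  refine .of_lt_imp_ne fun t t' htt' heq => ?_
  have hmem : pickedItem u hπ t' ∈ (stateAfter u π (t + 1)).1 :=
    antitone_stateAfter_fst u π (Fin.lt_def.1 htt') (pickedItem_mem u hπ t')
  rw [← heq, stateAfter_add_one_eq u hπ] at hmem
  exact notMem_erase _ _ hmem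

lemma value_pickedItem_le {t t' : Fin π.length} (h : t ≤ t') :
    u (π.get t) (pickedItem u hπ t') ≤ u (π.get t) (pickedItem u hπ t) :=
  le_pickedItem u hπ t (pickedItem_mem_of_le u hπ h)

lemma stateAfter_snd {k : ℕ} (hk : k ≤ π.length) (a : Fin n) :
    (stateAfter u π k).2 a = ({t | t.1 < k ∧ π.get t = a} : Finset _).image (pickedItem u hπ) := by
  induction k with
  | zero => simp [stateAfter]
  | succ k ih =>
    have hmem := fun x => Finset.ext_iff.1 (ih (by omega)) x
    rw [stateAfter_add_one_eq u hπ ⟨k, by omega⟩]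
    ext x
    simp only [mem_image, mem_filter, mem_univ, true_and, Function.update_apply] at hmem ⊢
    split_ifs <;> grind

lemma allocate_eq_image (a : Fin n) :
    allocate u π a = ({t | π.get t = a} : Finset _).image (pickedItem u hπ) := by
  rw [allocate_eq_stateAfter_length, stateAfter_snd u hπ le_rfl]
  simp

lemma disjoint_allocate {a b : Fin n} (hab : a ≠ b) :
    Disjoint (allocate u π a) (allocate u π b) := by
  rw [allocate_eq_image u hπ, allocate_eq_image u hπ, disjoint_image (pickedItem_injective u hπ)]
  exact disjoint_filter.2 fun t _ ha hb => hab (ha.symm.trans hb)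

lemma sum_allocate (v : Fin m → ℝ) (a : Fin n) :
    ∑ x ∈ allocate u π a, v x = ∑ t : Fin π.length with π.get t = a, v (pickedItem u hπ t) := by
  rw [allocate_eq_image u hπ, sum_image fun t _ t' _ h => pickedItem_injective u hπ h]

end Picking

lemma sum_range_mul_nonneg_of_antitone {z g : ℕ → ℝ} {N : ℕ} (hz : Antitone z)
    (hzN : 0 ≤ z (N - 1)) (hg : ∀ k ≤ N, 0 ≤ ∑ i ∈ range k, g i) :
    0 ≤ ∑ t ∈ range N, z t * g t := by
  have hparts := sum_range_by_parts z g N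
  simp only [smul_eq_mul] at hparts
  rw [hparts, sub_nonneg]
  calc ∑ i ∈ range (N - 1), (z (i + 1) - z i) * ∑ j ∈ range (i + 1), g j
      ≤ 0 := sum_nonpos fun i hi => mul_nonpos_of_nonpos_of_nonneg
        (sub_nonpos.2 (hz i.le_succ)) (hg _ (by rw [mem_range] at hi; omega))
    _ ≤ z (N - 1) * ∑ i ∈ range N, g i := mul_nonneg hzN (hg N le_rfl)

section Charging

variable {ι : Type*} {S : Finset ι} {ρ c : ι → ℕ} {α β : ℝ}

lemma mul_card_filter_le (hρ : Set.InjOn ρ S) (hα : 0 ≤ α) (hβ : 0 ≤ β)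
    (h : ∀ s ∈ S, α * (ρ s + 1) ≤ β * (c s + 1)) (r : ℕ) :
    α * #{s ∈ S | c s ≤ r} ≤ β * (r + 1) := by
  rcases (S.filter (c · ≤ r)).eq_empty_or_nonempty with hF | hF
  · rw [hF, card_empty, Nat.cast_zero, mul_zero]
    positivity
  obtain ⟨s, hs, hmax⟩ := exists_max_image _ ρ hF
  obtain ⟨hsS, hsr⟩ := mem_filter.1 hs
  have hcard : #{s ∈ S | c s ≤ r} ≤ ρ s + 1 := by
    simpa using card_le_card_of_injOn ρ (t := range (ρ s + 1))
      (fun x hx => mem_range.2 (Nat.lt_succ_of_le (hmax x hx))) (hρ.mono (filter_subset _ _))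
  calc α * #{s ∈ S | c s ≤ r} ≤ α * (ρ s + 1) := by gcongr; exact_mod_cast hcard
    _ ≤ β * (c s + 1) := h s hsS
    _ ≤ β * (r + 1) := by gcongr

theorem mul_sum_comp_le_mul_sum_range (hρ : Set.InjOn ρ S) {z : ℕ → ℝ} (hz : Antitone z)
    (hz0 : ∀ t, 0 ≤ z t) {N : ℕ} (hcN : ∀ s ∈ S, c s < N) (hα : 0 ≤ α) (hβ : 0 ≤ β)
    (h : ∀ s ∈ S, α * (ρ s + 1) ≤ β * (c s + 1)) :
    α * ∑ s ∈ S, z (c s) ≤ β * ∑ t ∈ range N, z t := by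
  have hfiber : ∑ s ∈ S, z (c s) = ∑ t ∈ range N, z t * #{s ∈ S | c s = t} := by
    rw [← sum_fiberwise_of_maps_to (fun s hs => mem_range.2 (hcN s hs))]
    refine sum_congr rfl fun t _ => ?_
    rw [sum_congr rfl fun s hs => by rw [(mem_filter.1 hs).2], sum_const, nsmul_eq_mul, mul_comm]
  have hpartial (k : ℕ) :
      ∑ t ∈ range k, (#{s ∈ S | c s = t} : ℝ) = #{s ∈ S | c s < k} := by
    rw [card_eq_sum_card_fiberwise (f := c) (t := range k)
      fun s hs => mem_range.2 (mem_filter.1 hs).2]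
    push_cast
    simp only [filter_filter]
    refine sum_congr rfl fun t ht => ?_
    congr 2
    exact filter_congr fun s _ => by rw [mem_range] at ht; constructor <;> intro h <;> omega
  have habel : 0 ≤ ∑ t ∈ range N, z t * (β - α * #{s ∈ S | c s = t}) := by
    refine sum_range_mul_nonneg_of_antitone hz (hz0 _) fun k _ => ?_
    rw [sum_sub_distrib, ← mul_sum, hpartial, sum_const, card_range, nsmul_eq_mul, sub_nonneg]
    rcases k with _ | k
    · simp
    · simpa [Nat.lt_succ_iff, mul_comm] using mul_card_filter_le hρ hα hβ h k
  have hsplit : ∑ t ∈ range N, z t * (β - α * #{s ∈ S | c s = t}) =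
      β * ∑ t ∈ range N, z t - α * ∑ s ∈ S, z (c s) := by
    rw [hfiber, mul_sum, mul_sum, ← sum_sub_distrib]
    exact sum_congr rfl fun t _ => by ring
  linarith

end Charging

namespace IsDivisorFn

variable {f : ℕ → ℝ}

lemma nonneg (hf : IsDivisorFn f) (t : ℕ) : 0 ≤ f t :=
  (Nat.cast_nonneg t).trans (hf.2 t).1

lemma pos (hf : IsDivisorFn f) {t : ℕ} (ht : 1 ≤ t) : 0 < f t :=
  Nat.cast_pos.2 ht |>.trans_le (hf.2 t).1

variable (hf : IsDivisorFn f) {wi wj : ℝ} {s c : ℕ} (hpick : wi * f s ≤ wj * f c)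
include hf hpick

lemma mul_le_mul_of_cond1 (h1 : ∀ a b : ℕ, 1 ≤ b → b ≤ a → f a / f b ≤ (a : ℝ) / b)
    (hwj : 0 ≤ wj) (hs : 1 ≤ s) (hsc : s ≤ c) : wi * s ≤ wj * c := by
  have hfs := hf.pos hs
  have hratio : f c * s ≤ c * f s :=
    (div_le_div_iff₀ hfs (by exact_mod_cast hs)).1 (h1 c s hs hsc)
  refine le_of_mul_le_mul_right ?_ hfs
  calc wi * s * f s = wi * f s * s := by ring
    _ ≤ wj * f c * s := by gcongr
    _ = wj * (f c * s) := by ring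
    _ ≤ wj * (c * f s) := by gcongr
    _ = wj * c * f s := by ring

lemma mul_succ_le_mul_succ_of_cond2
    (h2 : ∀ a b : ℕ, a ≤ b → b ≠ 0 → f a / f b ≤ ((a : ℝ) + 1) / ((b : ℝ) + 1))
    (hwj : 0 ≤ wj) (hs : 1 ≤ s) (hcs : c ≤ s) : wi * (s + 1) ≤ wj * (c + 1) := by
  have hfs := hf.pos hs
  have hratio : f c * (s + 1) ≤ (c + 1) * f s :=
    (div_le_div_iff₀ hfs (by positivity)).1 (h2 c s hcs (by omega))
  refine le_of_mul_le_mul_right ?_ hfs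
  calc wi * (s + 1) * f s = wi * f s * (s + 1) := by ring
    _ ≤ wj * f c * (s + 1) := by gcongr
    _ = wj * (f c * (s + 1)) := by ring
    _ ≤ wj * ((c + 1) * f s) := by gcongr
    _ = wj * (c + 1) * f s := by ring

variable (h1 : ∀ a b : ℕ, 1 ≤ b → b ≤ a → f a / f b ≤ (a : ℝ) / b)
  (h2 : ∀ a b : ℕ, a ≤ b → b ≠ 0 → f a / f b ≤ ((a : ℝ) + 1) / ((b : ℝ) + 1))
include h1 h2

lemma mul_succ_le_mul_succ_of_le (hwi : 0 < wi) (hw : wi ≤ wj) :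
    wi * (s + 1) ≤ wj * (c + 1) := by
  rcases Nat.eq_zero_or_pos s with rfl | hs
  · have : wj ≤ wj * (c + 1) := le_mul_of_one_le_right (hwi.le.trans hw) (by simp)
    push_cast
    linarith
  rcases le_total s c with hsc | hcs
  · linarith [hf.mul_le_mul_of_cond1 hpick h1 (hwi.le.trans hw) hs hsc]
  · exact hf.mul_succ_le_mul_succ_of_cond2 hpick h2 (hwi.le.trans hw) hs hcs

lemma one_le_and_mul_le_mul_of_le (hwj : 0 < wj) (hw : wj ≤ wi) (hs : 1 ≤ s) :
    1 ≤ c ∧ wi * s ≤ wj * c := by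
  rcases le_total s c with hsc | hcs
  · exact ⟨hs.trans hsc, hf.mul_le_mul_of_cond1 hpick h1 hwj.le hs hsc⟩
  have key := hf.mul_succ_le_mul_succ_of_cond2 hpick h2 hwj.le hs hcs
  have hs' : (1 : ℝ) ≤ s := by exact_mod_cast hs
  refine ⟨?_, by nlinarith⟩
  by_contra hc
  rw [Nat.lt_one_iff.1 (not_le.1 hc)] at key
  push_cast at key
  nlinarith

end IsDivisorFn

section Envy

variable {n : ℕ} {π : List (Fin n)} {i j : Fin n} {v : Fin π.length → ℝ} {top : ℝ}

/-- The minimum of `top` and of the values under `v` of agent `i`'s first `k` picks. -/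
noncomputable def prefixMin (π : List (Fin n)) (i : Fin n) (v : Fin π.length → ℝ) (top : ℝ)
    (k : ℕ) : ℝ :=
  (insert top (({t | π.get t = i ∧ (π.take t).count i < k} : Finset _).image v)).min'
    (insert_nonempty _ _)

lemma antitone_prefixMin : Antitone (prefixMin π i v top) := fun k k' hkk' =>
  min'_subset _ <| insert_subset_insert _ <| image_subset_image fun t ht => by
    simp only [mem_filter] at ht ⊢
    exact ⟨ht.1, ht.2.1, ht.2.2.trans_le hkk'⟩

lemma prefixMin_nonneg (hv : ∀ t, 0 ≤ v t) (htop : 0 ≤ top) (k : ℕ) :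
    0 ≤ prefixMin π i v top k :=
  le_min' _ _ _ fun y hy => by
    obtain rfl | ⟨t, -, rfl⟩ := mem_insert.1 hy |>.imp_right mem_image.1
    exacts [htop, hv t]

lemma prefixMin_le_top (k : ℕ) : prefixMin π i v top k ≤ top :=
  min'_le _ _ (mem_insert_self _ _)

lemma prefixMin_count_take_add_one_le {t : Fin π.length} (ht : π.get t = i) :
    prefixMin π i v top ((π.take t).count i + 1) ≤ v t :=
  min'_le _ _ <| mem_insert_of_mem <| mem_image_of_mem _ <|
    mem_filter.2 ⟨mem_univ _, ht, Nat.lt_succ_self _⟩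

lemma le_prefixMin {t : Fin π.length} (htop : v t ≤ top)
    (hgreedy : ∀ t', π.get t' = i → t' < t → v t ≤ v t') :
    v t ≤ prefixMin π i v top ((π.take t).count i) := by
  refine le_min' _ _ _ fun y hy => ?_
  simp only [mem_insert, mem_image, mem_filter, mem_univ, true_and] at hy
  obtain rfl | ⟨t', ⟨ht', hcount⟩, rfl⟩ := hy
  · exact htop
  · exact hgreedy t' ht' (lt_of_not_ge fun h => hcount.not_ge (π.monotone_count_take i h))

lemma sum_range_prefixMin_add_one_le :
    ∑ k ∈ range (π.count i), prefixMin π i v top (k + 1) ≤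
      ∑ t : Fin π.length with π.get t = i, v t := by
  rw [List.sum_range_count]
  exact sum_le_sum fun t ht => prefixMin_count_take_add_one_le (mem_filter.1 ht).2

lemma sum_sub_le_sum_of_one_le_count_take (htop0 : 0 ≤ top)
    (htop : ∀ t, π.get t = j → v t ≤ top) :
    ∑ t : Fin π.length with π.get t = j, v t - top ≤
      ∑ t : Fin π.length with π.get t = j ∧ 1 ≤ (π.take t).count j, v t := by
  set T : Finset (Fin π.length) := {t | π.get t = j}
  -- what is left out is `j`'s first pick
  set F := T.filter fun t : Fin π.length => ¬1 ≤ (π.take t).count j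
  have hF : #F ≤ 1 := card_le_one.2 fun a ha b hb => by
    simp only [F, T, mem_filter, mem_univ, true_and, not_le, Nat.lt_one_iff] at ha hb
    exact (π.strictMonoOn_count_take j).injOn ha.1 hb.1 (by simp only [ha.2, hb.2])
  have hFtop : ∑ t ∈ F, v t ≤ top :=
    calc ∑ t ∈ F, v t ≤ #F • top :=
          sum_le_card_nsmul _ _ _ fun t ht => htop t (mem_filter.1 (mem_filter.1 ht).1).2
      _ ≤ top := by
          rw [nsmul_eq_mul]
          exact mul_le_of_le_one_left htop0 (by exact_mod_cast hF)
  rw [← sum_filter_add_sum_filter_not T fun t : Fin π.length => 1 ≤ (π.take t).count j,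
    filter_filter]
  linarith

variable {α β : ℝ} (hα : 0 ≤ α) (hβ : 0 ≤ β) (hv : ∀ t, 0 ≤ v t) (htop0 : 0 ≤ top)
  (htop : ∀ t, π.get t = j → v t ≤ top)
  (hgreedy : ∀ t t', π.get t = i → t < t' → v t' ≤ v t)
include hα hβ hv htop0 htop hgreedy

lemma mul_sum_le_mul_add_sum
    (h : ∀ t, π.get t = j → α * ((π.take t).count j + 1) ≤ β * ((π.take t).count i + 1)) :
    α * ∑ t : Fin π.length with π.get t = j, v t ≤
      β * (top + ∑ t : Fin π.length with π.get t = i, v t) := by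
  calc α * ∑ t : Fin π.length with π.get t = j, v t
      ≤ α * ∑ t : Fin π.length with π.get t = j, prefixMin π i v top ((π.take t).count i) := by
        gcongr with t ht
        exact le_prefixMin (htop t (mem_filter.1 ht).2) fun t' ht' h => hgreedy t' t ht' h
    _ ≤ β * ∑ k ∈ range (π.count i + 1), prefixMin π i v top k :=
        mul_sum_comp_le_mul_sum_range (by simpa using (π.strictMonoOn_count_take j).injOn)
          antitone_prefixMin (prefixMin_nonneg hv htop0)
          (fun t _ => Nat.lt_succ_of_le (π.count_take_le_count i t)) hα hβ
          fun t ht => h t (mem_filter.1 ht).2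
    _ ≤ β * (top + ∑ t : Fin π.length with π.get t = i, v t) := by
        rw [sum_range_succ', add_comm]
        gcongr
        exacts [prefixMin_le_top 0, sum_range_prefixMin_add_one_le]

lemma mul_sum_sub_le_mul_sum
    (h : ∀ t, π.get t = j → 1 ≤ (π.take t).count j →
      1 ≤ (π.take t).count i ∧ α * (π.take t).count j ≤ β * (π.take t).count i) :
    α * (∑ t : Fin π.length with π.get t = j, v t - top) ≤
      β * ∑ t : Fin π.length with π.get t = i, v t := by
  set S : Finset (Fin π.length) := {t | π.get t = j ∧ 1 ≤ (π.take t).count j}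
  have hS (t) (ht : t ∈ S) := (mem_filter.1 ht).2
  calc α * (∑ t : Fin π.length with π.get t = j, v t - top) ≤ α * ∑ t ∈ S, v t := by
        gcongr
        exact sum_sub_le_sum_of_one_le_count_take htop0 htop
    _ ≤ α * ∑ t ∈ S, prefixMin π i v top ((π.take t).count i - 1 + 1) := by
        gcongr with t ht
        rw [Nat.sub_add_cancel (h t (hS t ht).1 (hS t ht).2).1]
        exact le_prefixMin (htop t (hS t ht).1) fun t' ht' h => hgreedy t' t ht' h
    _ ≤ β * ∑ k ∈ range (π.count i), prefixMin π i v top (k + 1) := by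
        refine mul_sum_comp_le_mul_sum_range (S := S) (ρ := fun t => (π.take t).count j - 1)
          (c := fun t => (π.take t).count i - 1) (z := fun k => prefixMin π i v top (k + 1))
          (fun a ha b hb hab => ?_) (antitone_prefixMin.comp_monotone fun _ _ h => by omega)
          (fun k => prefixMin_nonneg hv htop0 _) (fun t ht => ?_) hα hβ fun t ht => ?_
        · have := (hS a ha).2
          have := (hS b hb).2
          exact (π.strictMonoOn_count_take j).injOn (hS a ha).1 (hS b hb).1
            (by simp only at hab ⊢; omega)
        · have := π.count_take_le_count i t
          have := (h t (hS t ht).1 (hS t ht).2).1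
          omega
        · obtain ⟨hc, hmul⟩ := h t (hS t ht).1 (hS t ht).2
          rw [Nat.cast_sub hc, Nat.cast_sub (hS t ht).2]
          simpa using hmul
    _ ≤ β * ∑ t : Fin π.length with π.get t = i, v t := by
        gcongr
        exact sum_range_prefixMin_add_one_le

end Envy

lemma IsDivisorSeq.mul_le_mul {n : ℕ} {f : ℕ → ℝ} {w : Fin n → ℝ} {π : List (Fin n)}
    (hseq : IsDivisorSeq f w π) (hw : ∀ i, 0 < w i) (t : Fin π.length) (i : Fin n) :
    w i * f ((π.take t).count (π.get t)) ≤ w (π.get t) * f ((π.take t).count i) := by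
  have := (hseq t t.2 i).1
  rw [div_le_div_iff₀ (hw _) (hw i)] at this
  linarith

theorem isWWEF1_allocate {f : ℕ → ℝ} (hf : IsDivisorFn f)
    (h1 : ∀ a b : ℕ, 1 ≤ b → b ≤ a → f a / f b ≤ (a : ℝ) / b)
    (h2 : ∀ a b : ℕ, a ≤ b → b ≠ 0 → f a / f b ≤ ((a : ℝ) + 1) / ((b : ℝ) + 1))
    {n m : ℕ} {w : Fin n → ℝ} (hw : ∀ i, 0 < w i) {π : List (Fin n)} (hπ : π.length = m)
    (hseq : IsDivisorSeq f w π) {u : Fin n → Fin m → ℝ} (hu : ∀ i j, 0 ≤ u i j) :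
    isWWEF1 w u (allocate u π) := by
  intro i j
  rcases eq_or_ne i j with rfl | hij
  · exact ⟨∅, empty_subset _, by simp, Or.inl (by simp)⟩
  rcases (allocate u π j).eq_empty_or_nonempty with hj | hj
  · refine ⟨∅, empty_subset _, by simp, Or.inl ?_⟩
    rw [hj, empty_sdiff, sum_empty, zero_div]
    exact div_nonneg (sum_nonneg fun x _ => hu i x) (hw i).le
  obtain ⟨g, hg, hgmax⟩ := exists_max_image _ (u i) hj
  refine ⟨{g}, singleton_subset_iff.2 hg, (card_singleton g).le, ?_⟩
  have hpick (t : Fin π.length) (ht : π.get t = j) :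
      w i * f ((π.take t).count j) ≤ w j * f ((π.take t).count i) :=
    ht ▸ hseq.mul_le_mul hw t i
  have htop (t : Fin π.length) (ht : π.get t = j) : u i (pickedItem u hπ t) ≤ u i g :=
    hgmax _ <| by rw [allocate_eq_image u hπ]; exact mem_image_of_mem _ (by simpa using ht)
  have hgreedy (t t' : Fin π.length) (ht : π.get t = i) (htt' : t < t') :
      u i (pickedItem u hπ t') ≤ u i (pickedItem u hπ t) :=
    ht ▸ value_pickedItem_le u hπ htt'.le
  rcases le_total (w i) (w j) with hw' | hw'
  · right
    have := mul_sum_le_mul_add_sum (hw i).le (hw j).le (fun t => hu _ _) (hu i g) htop hgreedy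
      fun t ht => hf.mul_succ_le_mul_succ_of_le (hpick t ht) h1 h2 (hw i) hw'
    rw [sum_union (disjoint_singleton_right.2 fun hgi => disjoint_left.1
        (disjoint_allocate u hπ hij) hgi hg), sum_singleton, sum_allocate u hπ, sum_allocate u hπ,
      div_le_div_iff₀ (hw j) (hw i)]
    linarith
  · left
    have := mul_sum_sub_le_mul_sum (hw i).le (hw j).le (fun t => hu _ _) (hu i g) htop hgreedy
      fun t ht hs => hf.one_le_and_mul_le_mul_of_le (hpick t ht) h1 h2 (hw j) hw' hs
    rw [sum_sdiff_eq_sub (singleton_subset_iff.2 hg), sum_singleton, sum_allocate u hπ,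
      sum_allocate u hπ, div_le_div_iff₀ (hw j) (hw i)]
    linarith

lemma exists_isDivisorSeq {n : ℕ} [NeZero n] (f : ℕ → ℝ) (w : Fin n → ℝ) (m : ℕ) :
    ∃ π : List (Fin n), π.length = m ∧ IsDivisorSeq f w π := by
  induction m with
  | zero => exact ⟨[], rfl, fun k hk => absurd hk (Nat.not_lt_zero k)⟩
  | succ m ih =>
    obtain ⟨π, hlen, hseq⟩ := ih
    -- ties in the key are broken by the lexicographic order towards the lower agent
    obtain ⟨a, -, ha⟩ :=
      exists_min_image univ (fun i => toLex (f (π.count i) / w i, i)) univ_nonempty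
    refine ⟨π ++ [a], by simp [hlen], fun k hk i => ?_⟩
    rw [List.length_append, List.length_singleton] at hk
    rcases (Nat.lt_succ_iff.1 hk).lt_or_eq with hk' | rfl
    · have h := hseq k hk' i
      simp only [List.get_eq_getElem] at h ⊢
      rwa [List.getElem_append_left hk', List.take_append_of_le_length hk'.le]
    · have h := Prod.Lex.le_iff.1 (ha i (mem_univ i))
      simp only [List.get_eq_getElem, List.getElem_append_right le_rfl, Nat.sub_self,
        List.getElem_singleton, List.take_left]
      simp only [ofLex_toLex] at h
      exact ⟨h.elim le_of_lt fun h => h.1.le,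
        fun hia => h.resolve_right fun h' => (not_le.2 hia) h'.2⟩

lemma IsDivisorSeq.exists_key_le {n : ℕ} {f : ℕ → ℝ} {w : Fin n → ℝ} {π : List (Fin n)}
    (hseq : IsDivisorSeq f w π) {a : Fin n} {k : ℕ} (hk : k < π.count a) :
    ∃ t : Fin π.length, (π.take t).count a = k ∧ ∀ i,
      f k / w a ≤ f ((π.take t).count i) / w i ∧
        (i < a → f k / w a < f ((π.take t).count i) / w i) := by
  obtain ⟨t, ht, hc⟩ := π.exists_get_eq_count_take_eq a hk
  refine ⟨t, hc, fun i => ?_⟩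
  have := hseq t t.2 i
  rwa [Fin.eta, ht, hc] at this

/-- When both agents reach key `f B / f B = f A / f A = 1`, the tie goes to agent `0`. -/
lemma count_eq_of_isDivisorSeq {f : ℕ → ℝ} (hf : StrictMono f) {A B : ℕ} (hA : 0 < f A)
    (hB : 0 < f B) {π : List (Fin 2)} (hlen : π.length = A + B + 1)
    (hseq : IsDivisorSeq f ![f B, f A] π) : π.count 0 = B + 1 ∧ π.count 1 = A := by
  have htake (t : Fin π.length) : (π.take t).count 0 + (π.take t).count 1 = t := by
    rw [List.count_zero_add_count_one, List.length_take]
    omega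
  have h1 : π.count 1 ≤ A := by
    by_contra! hA'
    obtain ⟨t, hc, hkey⟩ := hseq.exists_key_le hA'
    have h := (hkey 0).2 Fin.zero_lt_one
    simp only [Matrix.cons_val_zero, Matrix.cons_val_one, div_self hA.ne', one_lt_div hB] at h
    have := hf.lt_iff_lt.1 h
    have := htake t
    omega
  have h0 : π.count 0 ≤ B + 1 := by
    by_contra! hB'
    obtain ⟨t, hc, hkey⟩ := hseq.exists_key_le hB'
    have h := (hkey 1).1
    simp only [Matrix.cons_val_zero, Matrix.cons_val_one] at h
    have := hf.lt_iff_lt.1 <| (one_lt_div hA).1 <|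
      (one_lt_div hB).2 (hf (Nat.lt_succ_self B)) |>.trans_le h
    have := htake t
    omega
  have := π.count_zero_add_count_one
  omega

def SatisfiesWWEF1 (f : ℕ → ℝ) : Prop :=
  ∀ (n m : ℕ) (w : Fin n → ℝ), (∀ i, 0 < w i) →
    ∀ π : List (Fin n), π.length = m → IsDivisorSeq f w π →
    ∀ u : Fin n → Fin m → ℝ, (∀ i j, 0 ≤ u i j) → isWWEF1 w u (allocate u π)

lemma card_allocate {n m : ℕ} (u : Fin n → Fin m → ℝ) {π : List (Fin n)} (hπ : π.length = m)
    (a : Fin n) : #(allocate u π a) = π.count a := by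
  rw [allocate_eq_image u hπ, card_image_of_injective _ (pickedItem_injective u hπ),
    List.card_filter_get_eq]

lemma SatisfiesWWEF1.le_or_le {f : ℕ → ℝ} (hW : SatisfiesWWEF1 f) (hf : IsDivisorFn f)
    {A B : ℕ} (hA : 0 < f A) (hB : 1 ≤ B) :
    f A * B ≤ f B * A ∨ f A * (B + 1) ≤ f B * (A + 1) := by
  have hfB := hf.pos hB
  obtain ⟨π, hlen, hseq⟩ := exists_isDivisorSeq f ![f B, f A] (A + B + 1)
  obtain ⟨h0, h1⟩ := count_eq_of_isDivisorSeq hf.1 hA hfB hlen hseq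
  have hw : ∀ i, 0 < ![f B, f A] i := Fin.forall_fin_two.2 ⟨hfB, hA⟩
  set u : Fin 2 → Fin (A + B + 1) → ℝ := fun _ _ => 1
  obtain ⟨S, hS, hScard, hS'⟩ := hW 2 _ _ hw π hlen hseq u (fun _ _ => zero_le_one) 1 0
  have hM0 := (card_allocate u hlen 0).trans h0
  have hM1 := (card_allocate u hlen 1).trans h1
  simp only [u, sum_const, nsmul_eq_mul, mul_one, Matrix.cons_val_zero, Matrix.cons_val_one]
    at hS'
  rcases hS' with h | h
  · left
    have hcard : B ≤ #(allocate u π 0 \ S) := by rw [card_sdiff_of_subset hS]; omega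
    have : (B : ℝ) / f B ≤ A / f A :=
      calc (B : ℝ) / f B ≤ #(allocate u π 0 \ S) / f B := by gcongr
        _ ≤ #(allocate u π 1) / f A := h
        _ = A / f A := by rw [hM1]
    rw [div_le_div_iff₀ hfB hA] at this
    linarith
  · right
    have hcard : #(allocate u π 1 ∪ S) ≤ A + 1 := (card_union_le _ _).trans (by omega)
    have : ((B : ℝ) + 1) / f B ≤ (A + 1) / f A :=
      calc ((B : ℝ) + 1) / f B = #(allocate u π 0) / f B := by rw [hM0, Nat.cast_succ]
        _ ≤ #(allocate u π 1 ∪ S) / f A := h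
        _ ≤ (A + 1) / f A := by gcongr; exact_mod_cast hcard
    rw [div_le_div_iff₀ hfB hA] at this
    linarith

/-- A divisor method with function `f` satisfies WWEF1 (produces a
WWEF1 allocation for every instance) if and only if (1) `f a / f b ≤ a / b` for all
integers `1 ≤ b ≤ a`, and (2) `f a / f b ≤ (a + 1) / (b + 1)` for all integers
`0 ≤ a ≤ b` with `b ≠ 0`. -/
theorem divisor_WWEF1_characterization (f : ℕ → ℝ) (hf : IsDivisorFn f) :
    (∀ (n m : ℕ) (w : Fin n → ℝ), (∀ i, 0 < w i) →
      ∀ π : List (Fin n), π.length = m → IsDivisorSeq f w π →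
      ∀ u : Fin n → Fin m → ℝ, (∀ i j, 0 ≤ u i j) →
        isWWEF1 w u (allocate u π)) ↔
      ((∀ a b : ℕ, 1 ≤ b → b ≤ a → f a / f b ≤ (a : ℝ) / b) ∧
       (∀ a b : ℕ, a ≤ b → b ≠ 0 → f a / f b ≤ ((a : ℝ) + 1) / ((b : ℝ) + 1))) := by
  refine ⟨fun hW => ⟨fun a b hb hba => ?_, fun a b hab hb => ?_⟩,
    fun ⟨h1, h2⟩ _ _ _ hw _ hπ hseq _ hu => isWWEF1_allocate hf h1 h2 hw hπ hseq hu⟩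
  · have hfab : f b ≤ f a := hf.1.monotone hba
    rw [div_le_div_iff₀ (hf.pos hb) (by exact_mod_cast hb)]
    rcases SatisfiesWWEF1.le_or_le hW hf (hf.pos (hb.trans hba)) hb with h | h <;> linarith
  · have hfab : f a ≤ f b := hf.1.monotone hab
    rw [div_le_div_iff₀ (hf.pos (Nat.one_le_iff_ne_zero.2 hb)) (by positivity)]
    rcases (hf.nonneg a).eq_or_lt with hfa | hfa
    · rw [← hfa, zero_mul]
      exact mul_nonneg (by positivity) (hf.nonneg b)
    rcases SatisfiesWWEF1.le_or_le hW hf hfa (Nat.one_le_iff_ne_zero.2 hb) with h | h <;> linarith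
end
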